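/- arXiv:1903.03403 — 3 statements merged into one kernel-verified Lean document; each statement's English description precedes it below -/
import Mathlib

section
/- For a bounded linear operator T on a complex Hilbert space H, with P = T*T + TT*, the fourth power of the numerical radius satisfies w(T)^4 ≤ (1/4)w(T²)² + (1/8)w(T²P + PT²) + (1/16)‖P‖². -/
open Complex

variable {H : Type*} [NormedAddCommGroup H] [InnerProductSpace ℂ H] [CompleteSpace H]

/-- The numerical radius `w(T) = sup {|⟨Tx,x⟩| : ‖x‖ = 1}`. -/
noncomputable def numRadius (T : H →L[ℂ] H) : ℝ :=
  sSup {r : ℝ | ∃ x : H, ‖x‖ = 1 ∧ r = ‖(inner ℂ (T x) x : ℂ)‖}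

/-- The Crawford number `m(T) = inf {|⟨Tx,x⟩| : ‖x‖ = 1}`. -/
noncomputable def crawford (T : H →L[ℂ] H) : ℝ :=
  sInf {r : ℝ | ∃ x : H, ‖x‖ = 1 ∧ r = ‖(inner ℂ (T x) x : ℂ)‖}

/-- The real part `Re(T) = (T + T*)/2`. -/
noncomputable def reOp (T : H →L[ℂ] H) : H →L[ℂ] H := (2 : ℂ)⁻¹ • (T + star T)

/-- The imaginary part `Im(T) = (T - T*)/(2i)`. -/
noncomputable def imOp (T : H →L[ℂ] H) : H →L[ℂ] H := (2 * Complex.I)⁻¹ • (T - star T)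

/-!
Fix a unit vector `x` and a unimodular `μ` with `|⟨Tx, x⟩| = ⟨Re(μT) x, x⟩ ≤ ‖Re(μT)‖`.
As `Re(μT)` is self-adjoint, `‖Re(μT)‖⁴ = ‖Re(μT)⁴‖`, and from `Re(μT)² = ½ Re(μ²T²) + ¼ P` we get
`Re(μT)⁴ = ¼ Re(μ²T²)² + ⅛ Re(μ²(T²P + PT²)) + ¹⁄₁₆ P²`. Each term is then bounded by the fact
that the real part of a unimodular multiple of `A` has norm at most `w(A)`, which for the
self-adjoint operator `Re(μA)` is the variational formula for its norm.
-/

open scoped InnerProductSpace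

section NumRadius

variable {E : Type*} [NormedAddCommGroup E] [InnerProductSpace ℂ E] (A : E →L[ℂ] E)

lemma norm_inner_le_numRadius {x : E} (hx : ‖x‖ = 1) : ‖⟪A x, x⟫_ℂ‖ ≤ numRadius A := by
  refine le_csSup ⟨‖A‖, ?_⟩ ⟨x, hx, rfl⟩
  rintro _ ⟨y, hy, rfl⟩
  exact (norm_inner_le_norm _ _).trans (by simpa [hy] using A.le_opNorm y)

lemma numRadius_nonneg : 0 ≤ numRadius A :=
  Real.sSup_nonneg (by rintro _ ⟨x, -, rfl⟩; exact norm_nonneg _)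

lemma norm_inner_le_numRadius_mul_sq (x : E) : ‖⟪A x, x⟫_ℂ‖ ≤ numRadius A * ‖x‖ ^ 2 := by
  rcases eq_or_ne x 0 with rfl | hx
  · simp
  have h := norm_inner_le_numRadius A (norm_smul_inv_norm (𝕜 := ℂ) hx)
  simp only [map_smul, inner_smul_left, inner_smul_right, norm_mul, RCLike.norm_conj, norm_inv,
    RCLike.norm_ofReal, abs_norm] at h
  calc ‖⟪A x, x⟫_ℂ‖ = ‖x‖⁻¹ * (‖x‖⁻¹ * ‖⟪A x, x⟫_ℂ‖) * ‖x‖ ^ 2 := by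
        field_simp [norm_ne_zero_iff.mpr hx]
    _ ≤ numRadius A * ‖x‖ ^ 2 := by gcongr

lemma numRadius_pow_le_of_forall {n : ℕ} (hn : n ≠ 0) {c : ℝ} (hc : 0 ≤ c)
    (h : ∀ x : E, ‖x‖ = 1 → ‖⟪A x, x⟫_ℂ‖ ^ n ≤ c) : numRadius A ^ n ≤ c := by
  have hroot : numRadius A ≤ c ^ (n⁻¹ : ℝ) := by
    refine Real.sSup_le ?_ (by positivity)
    rintro _ ⟨x, hx, rfl⟩
    rw [← Real.pow_rpow_inv_natCast (norm_nonneg _) hn]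
    exact Real.rpow_le_rpow (by positivity) (h x hx) (by positivity)
  calc numRadius A ^ n ≤ (c ^ (n⁻¹ : ℝ)) ^ n := by gcongr; exact numRadius_nonneg A
    _ = c := Real.rpow_inv_natCast_pow hc hn

end NumRadius

lemma isSelfAdjoint_reOp (A : H →L[ℂ] H) : IsSelfAdjoint (reOp A) := by
  simp only [IsSelfAdjoint, reOp, star_smul, star_add, star_star, star_inv₀, star_ofNat]
  rw [add_comm]

lemma inner_reOp_apply_self (A : H →L[ℂ] H) (x : H) :
    ⟪reOp A x, x⟫_ℂ = (⟪A x, x⟫_ℂ).re := by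
  have hstar : ⟪star A x, x⟫_ℂ = (starRingEnd ℂ) ⟪A x, x⟫_ℂ := by
    rw [ContinuousLinearMap.star_eq_adjoint, ContinuousLinearMap.adjoint_inner_left,
      inner_conj_symm]
  simp only [reOp, smul_apply, add_apply, inner_smul_left, inner_add_left, hstar,
    Complex.re_eq_add_conj, map_inv₀, map_ofNat]
  ring

lemma norm_reOp_smul_le_numRadius (A : H →L[ℂ] H) {μ : ℂ} (hμ : ‖μ‖ = 1) :
    ‖reOp (μ • A)‖ ≤ numRadius A := by
  rw [ContinuousLinearMap.norm_eq_iSup_rayleighQuotient _ (isSelfAdjoint_reOp _).isSymmetric]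
  refine ciSup_le fun x => ?_
  rw [ContinuousLinearMap.rayleighQuotient, ContinuousLinearMap.reApplyInnerSelf_apply,
    inner_reOp_apply_self, RCLike.re_to_complex, Complex.ofReal_re, abs_div, abs_sq]
  refine div_le_of_le_mul₀ (by positivity) (numRadius_nonneg A) ?_
  calc |(⟪(μ • A) x, x⟫_ℂ).re| ≤ ‖⟪(μ • A) x, x⟫_ℂ‖ := Complex.abs_re_le_norm _
    _ = ‖⟪A x, x⟫_ℂ‖ := by
      rw [smul_apply, inner_smul_left, norm_mul, RCLike.norm_conj, hμ, one_mul]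
    _ ≤ numRadius A * ‖x‖ ^ 2 := norm_inner_le_numRadius_mul_sq A x

lemma exists_norm_inner_le_norm_reOp (A : H →L[ℂ] H) {x : H} (hx : ‖x‖ = 1) :
    ∃ μ : ℂ, ‖μ‖ = 1 ∧ ‖⟪A x, x⟫_ℂ‖ ≤ ‖reOp (μ • A)‖ := by
  obtain ⟨μ, hμ, hμx⟩ := RCLike.exists_norm_eq_mul_self ⟪A x, x⟫_ℂ
  refine ⟨starRingEnd ℂ μ, by rwa [RCLike.norm_conj], ?_⟩
  have h := (reOp (starRingEnd ℂ μ • A)).rayleighQuotient_le_norm x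
  rw [ContinuousLinearMap.rayleighQuotient, ContinuousLinearMap.reApplyInnerSelf_apply,
    inner_reOp_apply_self, smul_apply, inner_smul_left, Complex.conj_conj, ← hμx, hx] at h
  simpa using h

lemma reOp_mul_add_mul_reOp (A : H →L[ℂ] H) {P : H →L[ℂ] H} (hP : IsSelfAdjoint P) :
    reOp A * P + P * reOp A = reOp (A * P + P * A) := by
  simp only [reOp, star_add, star_mul, hP.star_eq, smul_mul_assoc, mul_smul_comm, add_mul, mul_add,
    smul_add]
  abel

lemma reOp_smul_sq (T : H →L[ℂ] H) {μ : ℂ} (hμ : ‖μ‖ = 1) :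
    reOp (μ • T) ^ 2 = (2⁻¹ : ℂ) • reOp (μ ^ 2 • T ^ 2) + (4⁻¹ : ℂ) • (star T * T + T * star T) := by
  have hμμ : starRingEnd ℂ μ * μ = 1 := by
    rw [RCLike.conj_mul, hμ]; norm_num
  simp only [reOp, sq, star_smul, star_mul, Complex.star_def, smul_add, add_mul, mul_add,
    smul_mul_smul_comm, hμμ, mul_comm μ (starRingEnd ℂ μ)]
  module

lemma norm_reOp_smul_pow_four_le (T : H →L[ℂ] H) {μ : ℂ} (hμ : ‖μ‖ = 1) :
    ‖reOp (μ • T)‖ ^ 4 ≤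
      (1/4) * numRadius (T ^ 2) ^ 2
        + (1/8) * numRadius (T ^ 2 * (star T * T + T * star T)
            + (star T * T + T * star T) * T ^ 2)
        + (1/16) * ‖star T * T + T * star T‖ ^ 2 := by
  set P := star T * T + T * star T
  set K := reOp (μ ^ 2 • T ^ 2)
  have hP : IsSelfAdjoint P := by
    simp only [P, IsSelfAdjoint, star_add, star_mul, star_star]
  have hμ2 : ‖μ ^ 2‖ = 1 := by rw [norm_pow, hμ, one_pow]
  have hKP : K * P + P * K = reOp (μ ^ 2 • (T ^ 2 * P + P * T ^ 2)) := by
    rw [reOp_mul_add_mul_reOp _ hP, smul_add, smul_mul_assoc, mul_smul_comm]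
  have hfour : reOp (μ • T) ^ 4
      = (4⁻¹ : ℂ) • K ^ 2 + (8⁻¹ : ℂ) • reOp (μ ^ 2 • (T ^ 2 * P + P * T ^ 2))
        + (16⁻¹ : ℂ) • P ^ 2 := by
    have hsq : reOp (μ • T) ^ 2 = (2⁻¹ : ℂ) • K + (4⁻¹ : ℂ) • P := reOp_smul_sq T hμ
    rw [← hKP, (by norm_num : 4 = 2 * 2), pow_mul, hsq]
    simp only [sq, add_mul, mul_add, smul_mul_smul_comm, smul_add]
    module
  have hK2 : ‖K ^ 2‖ = ‖K‖ ^ 2 := by simpa using (isSelfAdjoint_reOp _).norm_pow_two_pow 1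
  have hP2 : ‖P ^ 2‖ = ‖P‖ ^ 2 := by simpa using hP.norm_pow_two_pow 1
  have h1 : ‖reOp (μ • T) ^ 4‖ = ‖reOp (μ • T)‖ ^ 4 := by
    simpa using (isSelfAdjoint_reOp (μ • T)).norm_pow_two_pow 2
  calc ‖reOp (μ • T)‖ ^ 4 = ‖reOp (μ • T) ^ 4‖ := h1.symm
    _ ≤ ‖(4⁻¹ : ℂ) • K ^ 2‖ + ‖(8⁻¹ : ℂ) • reOp (μ ^ 2 • (T ^ 2 * P + P * T ^ 2))‖
        + ‖(16⁻¹ : ℂ) • P ^ 2‖ := by rw [hfour]; exact norm_add₃_le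
    _ = (1/4) * ‖K‖ ^ 2 + (1/8) * ‖reOp (μ ^ 2 • (T ^ 2 * P + P * T ^ 2))‖
        + (1/16) * ‖P‖ ^ 2 := by
      simp only [norm_smul, hK2, hP2, norm_inv]
      norm_num
    _ ≤ _ := by
      gcongr
      · exact norm_reOp_smul_le_numRadius _ hμ2
      · exact norm_reOp_smul_le_numRadius _ hμ2

theorem stmt0 (T : H →L[ℂ] H) :
    numRadius T ^ 4 ≤
      (1/4) * numRadius (T ^ 2) ^ 2
        + (1/8) * numRadius (T ^ 2 * (star T * T + T * star T)
            + (star T * T + T * star T) * T ^ 2)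
        + (1/16) * ‖star T * T + T * star T‖ ^ 2 := by
  have hwQ := numRadius_nonneg (T ^ 2 * (star T * T + T * star T)
    + (star T * T + T * star T) * T ^ 2)
  refine numRadius_pow_le_of_forall T four_ne_zero (by positivity) fun x hx => ?_
  obtain ⟨μ, hμ, hle⟩ := exists_norm_inner_le_norm_reOp T hx
  exact (pow_le_pow_left₀ (norm_nonneg _) hle 4).trans (norm_reOp_smul_pow_four_le T hμ)
end

section
/- For a bounded linear operator T on a complex Hilbert space, w(T)² ≥ (1/4)‖T*T + TT*‖. -/
/-!
Write `T = A + iB` with `A = ℜ T` and `B = ℑ T` self-adjoint, so that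
`T*T + TT* = 2 (A² + B²)` and `‖T*T + TT*‖ ≤ 2 (‖A‖² + ‖B‖²)`. The quadratic forms of `A` and `B`
are, up to sign, the real and imaginary parts of `⟪T x, x⟫`, hence bounded by `w(T) ‖x‖²`; since
the norm of a self-adjoint operator is the supremum of its quadratic form on the unit sphere,
`‖A‖, ‖B‖ ≤ w(T)`, and therefore `‖T*T + TT*‖ ≤ 4 w(T)²`.
-/

open Complex

variable {H : Type*} [NormedAddCommGroup H] [InnerProductSpace ℂ H] [CompleteSpace H]

open scoped InnerProductSpace ComplexStarModule

theorem ContinuousLinearMap.opNorm_le_of_abs_re_inner_self_le {𝕜 E : Type*} [RCLike 𝕜]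
    [NormedAddCommGroup E] [InnerProductSpace 𝕜 E] {S : E →L[𝕜] E} (hS : S.IsSymmetric)
    {M : ℝ} (hM : 0 ≤ M) (h : ∀ x, |RCLike.re ⟪S x, x⟫_𝕜| ≤ M * ‖x‖ ^ 2) : ‖S‖ ≤ M := by
  rw [S.norm_eq_iSup_rayleighQuotient hS]
  refine ciSup_le fun x => ?_
  rcases eq_or_ne x 0 with rfl | hx
  · simpa using hM
  rw [ContinuousLinearMap.rayleighQuotient, abs_div, abs_sq, div_le_iff₀ (by positivity)]
  exact h x

theorem norm_star_mul_self_add_self_mul_star_le {A : Type*} [NonUnitalNormedRing A] [StarRing A]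
    [Module ℂ A] [IsScalarTower ℂ A A] [SMulCommClass ℂ A A] [StarModule ℂ A] (a : A) :
    ‖star a * a + a * star a‖ ≤ 2 * (‖(ℜ a : A)‖ ^ 2 + ‖(ℑ a : A)‖ ^ 2) := by
  rw [star_mul_self_add_self_mul_star]
  refine norm_nsmul_le.trans ?_
  grw [norm_add_le, norm_mul_le, norm_mul_le]
  simp [sq]

section NumericalRadius

variable {E : Type*} [NormedAddCommGroup E] [InnerProductSpace ℂ E]

theorem bddAbove_norm_inner_self_sphere (T : E →L[ℂ] E) :
    BddAbove {r : ℝ | ∃ x : E, ‖x‖ = 1 ∧ r = ‖⟪T x, x⟫_ℂ‖} := by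
  refine ⟨‖T‖, ?_⟩
  rintro _ ⟨x, hx, rfl⟩
  exact (norm_inner_le_norm _ _).trans (by simpa [hx] using T.le_opNorm x)

theorem numRadius_nonneg_s9 (T : E →L[ℂ] E) : 0 ≤ numRadius T :=
  Real.sSup_nonneg fun _ ⟨_, _, hr⟩ => hr ▸ norm_nonneg _

theorem norm_inner_self_le_numRadius_mul_sq (T : E →L[ℂ] E) (x : E) :
    ‖⟪T x, x⟫_ℂ‖ ≤ numRadius T * ‖x‖ ^ 2 := by
  rcases eq_or_ne x 0 with rfl | hx
  · simp
  set u : E := (‖x‖ : ℂ)⁻¹ • x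
  have hu : ‖⟪T u, u⟫_ℂ‖ ≤ numRadius T :=
    le_csSup (bddAbove_norm_inner_self_sphere T) ⟨u, norm_smul_inv_norm hx, rfl⟩
  have hscale : ‖⟪T x, x⟫_ℂ‖ = ‖⟪T u, u⟫_ℂ‖ * ‖x‖ ^ 2 := by
    simp [u, field]
  rw [hscale]
  gcongr

end NumericalRadius

theorem inner_star_apply_self (T : H →L[ℂ] H) (x : H) :
    ⟪star T x, x⟫_ℂ = starRingEnd ℂ ⟪T x, x⟫_ℂ := by
  rw [ContinuousLinearMap.star_eq_adjoint, ContinuousLinearMap.adjoint_inner_left, inner_conj_symm]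

theorem re_inner_realPart_apply_self (T : H →L[ℂ] H) (x : H) :
    (⟪(ℜ T : H →L[ℂ] H) x, x⟫_ℂ).re = (⟪T x, x⟫_ℂ).re := by
  rw [realPart_apply_coe, smul_apply, add_apply, RCLike.real_smul_eq_coe_smul (K := ℂ),
    inner_smul_real_left, inner_add_left, inner_star_apply_self, add_conj]
  simp

theorem re_inner_imaginaryPart_apply_self (T : H →L[ℂ] H) (x : H) :
    (⟪(ℑ T : H →L[ℂ] H) x, x⟫_ℂ).re = -(⟪T x, x⟫_ℂ).im := by
  rw [imaginaryPart_apply_coe, smul_apply, smul_apply, sub_apply, inner_smul_left,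
    RCLike.real_smul_eq_coe_smul (K := ℂ), inner_smul_real_left, inner_sub_left,
    inner_star_apply_self, sub_conj]
  simp

theorem norm_realPart_le_numRadius (T : H →L[ℂ] H) : ‖(ℜ T : H →L[ℂ] H)‖ ≤ numRadius T :=
  ContinuousLinearMap.opNorm_le_of_abs_re_inner_self_le (ℜ T).2.isSymmetric (numRadius_nonneg_s9 T)
    fun x => by
      rw [RCLike.re_to_complex, re_inner_realPart_apply_self]
      exact (abs_re_le_norm _).trans (norm_inner_self_le_numRadius_mul_sq T x)

theorem norm_imaginaryPart_le_numRadius (T : H →L[ℂ] H) : ‖(ℑ T : H →L[ℂ] H)‖ ≤ numRadius T :=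
  ContinuousLinearMap.opNorm_le_of_abs_re_inner_self_le (ℑ T).2.isSymmetric (numRadius_nonneg_s9 T)
    fun x => by
      rw [RCLike.re_to_complex, re_inner_imaginaryPart_apply_self, abs_neg]
      exact (abs_im_le_norm _).trans (norm_inner_self_le_numRadius_mul_sq T x)

theorem stmt9 (T : H →L[ℂ] H) :
    numRadius T ^ 2 ≥ (1/4) * ‖star T * T + T * star T‖ := by
  rw [ge_iff_le]
  calc (1/4) * ‖star T * T + T * star T‖
      ≤ (1/4) * (2 * (‖(ℜ T : H →L[ℂ] H)‖ ^ 2 + ‖(ℑ T : H →L[ℂ] H)‖ ^ 2)) := by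
        gcongr
        exact norm_star_mul_self_add_self_mul_star_le T
    _ ≤ (1/4) * (2 * (numRadius T ^ 2 + numRadius T ^ 2)) := by
        gcongr
        exacts [norm_realPart_le_numRadius T, norm_imaginaryPart_le_numRadius T]
    _ = numRadius T ^ 2 := by ring
end

section
/- Every zero μ of the monic polynomial p(z) = zⁿ + a_{n-1}z^{n-1} + … + a₁z + a₀ (n ≥ 2, complex coefficients) satisfies |μ| ≤ ((1/2)·w(C²)² + (1/4)·‖(C*C)² + (CC*)²‖)^{1/4}, where C = C(p) is the Frobenius companion matrix of p. -/
open Complex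

variable {H : Type*} [NormedAddCommGroup H] [InnerProductSpace ℂ H] [CompleteSpace H]

/-- The Frobenius companion matrix of `z^n + a_{n-1} z^{n-1} + ⋯ + a_1 z + a_0`,
viewed as an operator on `ℂⁿ`: first row `(-a_{n-1}, …, -a_0)`, ones on the subdiagonal. -/
noncomputable def companionCLM (n : ℕ) (a : Fin n → ℂ) :
    EuclideanSpace ℂ (Fin n) →L[ℂ] EuclideanSpace ℂ (Fin n) :=
  Matrix.toEuclideanCLM (𝕜 := ℂ)
    (Matrix.of fun i j =>
      if (i : ℕ) = 0 then -a j.rev else if (i : ℕ) = (j : ℕ) + 1 then 1 else 0)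

/-! If `C x = μ • x` with `‖x‖ = 1`, then `‖μ‖² = |⟪C² x, x⟫| ≤ w(C²)`. Moreover
`‖μ‖² = ‖C x‖² ≤ ‖C*C x‖` and `‖μ‖² = |⟪C* x, x⟫|² ≤ ‖C* x‖² ≤ ‖CC* x‖`, and for self-adjoint
`A`, `B` one has `‖A x‖² + ‖B x‖² = Re ⟪(A² + B²) x, x⟫ ≤ ‖A² + B²‖`; hence
`2 ‖μ‖⁴ ≤ ‖(C*C)² + (CC*)²‖`. Averaging the two bounds gives the fourth power of the claim.
For a zero `μ` of `p`, the vector `(μ^(n-1), …, μ, 1)` is such an eigenvector of `C(p)`. -/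

open ContinuousLinearMap RCLike

section Operator

variable {𝕜 E : Type*} [RCLike 𝕜] [NormedAddCommGroup E] [InnerProductSpace 𝕜 E]

lemma exists_norm_eq_one_apply_eq_smul {T : E →L[𝕜] E} {μ : 𝕜} {v : E} (hv : v ≠ 0)
    (hTv : T v = μ • v) : ∃ x : E, ‖x‖ = 1 ∧ T x = μ • x :=
  ⟨(‖v‖⁻¹ : 𝕜) • v, norm_smul_inv_norm hv, by rw [map_smul, hTv, smul_comm]⟩

lemma re_inner_apply_self_le_opNorm (T : E →L[𝕜] E) {x : E} (hx : ‖x‖ = 1) :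
    re (inner 𝕜 (T x) x) ≤ ‖T‖ :=
  calc re (inner 𝕜 (T x) x) ≤ ‖T x‖ * ‖x‖ := re_inner_le_norm _ _
    _ ≤ ‖T‖ := by simpa [hx] using T.unit_le_opNorm x hx.le

variable [CompleteSpace E]

lemma sq_norm_apply_le_norm_star_mul_self_apply (T : E →L[𝕜] E) {x : E} (hx : ‖x‖ = 1) :
    ‖T x‖ ^ 2 ≤ ‖(star T * T) x‖ :=
  calc ‖T x‖ ^ 2 = re (inner 𝕜 ((star T * T) x) x) := by
        rw [star_eq_adjoint, mul_def]; exact apply_norm_sq_eq_inner_adjoint_left T x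
    _ ≤ ‖(star T * T) x‖ * ‖x‖ := re_inner_le_norm _ _
    _ = ‖(star T * T) x‖ := by rw [hx, mul_one]

lemma IsSelfAdjoint.re_inner_sq_apply_self {A : E →L[𝕜] E} (hA : IsSelfAdjoint A) (x : E) :
    re (inner 𝕜 ((A ^ 2) x) x) = ‖A x‖ ^ 2 := by
  have hsymm : inner 𝕜 (A (A x)) x = inner 𝕜 (A x) (A x) := hA.isSymmetric (A x) x
  rw [pow_two, mul_apply_eq_comp, hsymm, inner_self_eq_norm_sq]

lemma IsSelfAdjoint.sq_norm_apply_add_sq_norm_apply_le {A B : E →L[𝕜] E} (hA : IsSelfAdjoint A)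
    (hB : IsSelfAdjoint B) {x : E} (hx : ‖x‖ = 1) :
    ‖A x‖ ^ 2 + ‖B x‖ ^ 2 ≤ ‖A ^ 2 + B ^ 2‖ := by
  rw [← hA.re_inner_sq_apply_self, ← hB.re_inner_sq_apply_self, ← map_add, ← inner_add_left,
    ← add_apply]
  exact re_inner_apply_self_le_opNorm _ hx

lemma two_mul_norm_pow_four_le_of_apply_eq_smul {C : E →L[𝕜] E} {μ : 𝕜} {x : E}
    (hx : ‖x‖ = 1) (hCx : C x = μ • x) :
    2 * ‖μ‖ ^ 4 ≤ ‖(star C * C) ^ 2 + (C * star C) ^ 2‖ := by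
  have hCx_norm : ‖C x‖ = ‖μ‖ := by rw [hCx, norm_smul, hx, mul_one]
  have hμ_le : ‖μ‖ ≤ ‖star C x‖ := by
    have hinner : inner 𝕜 (star C x) x = μ := by
      rw [star_eq_adjoint, adjoint_inner_left, hCx, inner_smul_right, inner_self_eq_norm_sq_to_K,
        hx]
      simp
    simpa [hinner, hx] using norm_inner_le_norm (𝕜 := 𝕜) (star C x) x
  have h₁ : ‖μ‖ ^ 2 ≤ ‖(star C * C) x‖ :=
    hCx_norm ▸ sq_norm_apply_le_norm_star_mul_self_apply C hx
  have h₂ : ‖μ‖ ^ 2 ≤ ‖(C * star C) x‖ :=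
    calc ‖μ‖ ^ 2 ≤ ‖star C x‖ ^ 2 := pow_le_pow_left₀ (norm_nonneg μ) hμ_le 2
      _ ≤ ‖(C * star C) x‖ := by
        simpa using sq_norm_apply_le_norm_star_mul_self_apply (star C) hx
  have hsum := (IsSelfAdjoint.star_mul_self C).sq_norm_apply_add_sq_norm_apply_le
    (IsSelfAdjoint.mul_star_self C) hx
  nlinarith [pow_le_pow_left₀ (by positivity) h₁ 2, pow_le_pow_left₀ (by positivity) h₂ 2]

end Operator

section NumericalRadius

variable {E : Type*} [NormedAddCommGroup E] [InnerProductSpace ℂ E]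

lemma norm_inner_apply_self_le_numRadius (T : E →L[ℂ] E) {x : E} (hx : ‖x‖ = 1) :
    ‖inner ℂ (T x) x‖ ≤ numRadius T := by
  refine le_csSup ⟨‖T‖, ?_⟩ ⟨x, hx, rfl⟩
  rintro r ⟨y, hy, rfl⟩
  calc ‖inner ℂ (T y) y‖ ≤ ‖T y‖ * ‖y‖ := norm_inner_le_norm _ _
    _ ≤ ‖T‖ := by simpa [hy] using T.unit_le_opNorm y hy.le

lemma sq_norm_le_numRadius_sq_of_apply_eq_smul {C : E →L[ℂ] E} {μ : ℂ} {x : E}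
    (hx : ‖x‖ = 1) (hCx : C x = μ • x) : ‖μ‖ ^ 2 ≤ numRadius (C ^ 2) := by
  have hC2x : (C ^ 2) x = μ ^ 2 • x := by
    rw [pow_two, mul_apply_eq_comp, hCx, map_smul, hCx, smul_smul, pow_two]
  have := norm_inner_apply_self_le_numRadius (C ^ 2) hx
  simpa [hC2x, inner_smul_left, inner_self_eq_norm_sq_to_K, hx] using this

variable [CompleteSpace E]

lemma norm_pow_four_le_of_apply_eq_smul {C : E →L[ℂ] E} {μ : ℂ} {x : E}
    (hx : ‖x‖ = 1) (hCx : C x = μ • x) :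
    ‖μ‖ ^ 4 ≤ (1/2) * numRadius (C ^ 2) ^ 2
      + (1/4) * ‖(star C * C) ^ 2 + (C * star C) ^ 2‖ := by
  have hw := sq_norm_le_numRadius_sq_of_apply_eq_smul hx hCx
  have hnorm := two_mul_norm_pow_four_le_of_apply_eq_smul hx hCx
  nlinarith [pow_le_pow_left₀ (by positivity) hw 2]

end NumericalRadius

lemma companionCLM_apply_pow_rev {m : ℕ} (a : Fin (m + 1) → ℂ) {μ : ℂ}
    (hμ : μ ^ (m + 1) + ∑ k, a k * μ ^ (k : ℕ) = 0) :
    companionCLM (m + 1) a (WithLp.toLp 2 fun j => μ ^ (j.rev : ℕ)) =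
      μ • WithLp.toLp 2 fun j => μ ^ (j.rev : ℕ) := by
  rw [companionCLM, Matrix.toEuclideanCLM_toLp, ← WithLp.toLp_smul]
  congr 1
  funext i
  simp only [Matrix.mulVec, dotProduct, Matrix.of_apply, Pi.smul_apply, smul_eq_mul]
  induction i using Fin.cases with
  | zero =>
    have hsum : ∑ j : Fin (m + 1), -a j.rev * μ ^ (j.rev : ℕ) = μ ^ (m + 1) := by
      refine (Equiv.sum_comp Fin.revPerm fun k => -a k * μ ^ (k : ℕ)).trans ?_
      simp only [neg_mul, Finset.sum_neg_distrib]
      linear_combination -hμ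
    simpa [pow_succ'] using hsum
  | succ i =>
    rw [Finset.sum_eq_single i.castSucc]
    · rw [Fin.val_succ, if_neg (Nat.succ_ne_zero _), Fin.val_castSucc, if_pos rfl, one_mul,
        ← pow_succ']
      congr 1
      simp only [Fin.val_rev, Fin.val_succ, Fin.val_castSucc]
      omega
    · intro j _ hj
      rw [Fin.val_succ, if_neg (Nat.succ_ne_zero _), if_neg, zero_mul]
      simpa [Fin.ext_iff, eq_comm] using hj
    · simp

theorem stmt16_general (n : ℕ) (a : Fin n → ℂ) (μ : ℂ)
    (hμ : μ ^ n + ∑ k : Fin n, a k * μ ^ (k : ℕ) = 0) :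
    ‖μ‖ ≤
      ((1/2) * numRadius (companionCLM n a ^ 2) ^ 2
        + (1/4) * ‖(star (companionCLM n a) * companionCLM n a) ^ 2
            + (companionCLM n a * star (companionCLM n a)) ^ 2‖) ^ ((1 : ℝ)/4) := by
  obtain ⟨m, rfl⟩ : ∃ m, n = m + 1 :=
    Nat.exists_eq_succ_of_ne_zero fun hn => by subst hn; simp at hμ
  set v : EuclideanSpace ℂ (Fin (m + 1)) := WithLp.toLp 2 fun j => μ ^ (j.rev : ℕ)
  have hv : v ≠ 0 := fun h => by simpa [v] using congr_fun (congr_arg WithLp.ofLp h) (Fin.last m)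
  obtain ⟨x, hx, hCx⟩ := exists_norm_eq_one_apply_eq_smul hv (companionCLM_apply_pow_rev a hμ)
  have h4 := norm_pow_four_le_of_apply_eq_smul hx hCx
  rw [one_div (4 : ℝ)] at h4 ⊢
  rw [Real.le_rpow_inv_iff_of_pos (norm_nonneg μ) (by positivity) (by norm_num)]
  exact_mod_cast h4

theorem stmt16 (n : ℕ) (hn : 2 ≤ n) (a : Fin n → ℂ) (μ : ℂ)
    (hμ : μ ^ n + ∑ k : Fin n, a k * μ ^ (k : ℕ) = 0) :
    ‖μ‖ ≤
      ((1/2) * numRadius (companionCLM n a ^ 2) ^ 2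
        + (1/4) * ‖(star (companionCLM n a) * companionCLM n a) ^ 2
            + (companionCLM n a * star (companionCLM n a)) ^ 2‖) ^ ((1 : ℝ)/4) :=
  stmt16_general n a μ hμ
end
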